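/- Let R be a ring and T4 the two-sided ideal of R generated by all commutators [a1,a2,a3,a4]. Then for all a1,...,a5 ∈ R, 3·[a1,a2]·[a3,a4,a5] belongs to T4. -/
import Mathlib


/-- Commutator `[a,b] = a*b - b*a`. -/
def br {R : Type*} [Ring R] (a b : R) : R := a * b - b * a

/-- Left-normed triple commutator `[a,b,c] = [[a,b],c]`. -/
def br3 {R : Type*} [Ring R] (a b c : R) : R := br (br a b) c

/-- Left-normed fourth commutator `[a,b,c,d] = [[[a,b],c],d]`. -/
def br4 {R : Type*} [Ring R] (a b c d : R) : R := br (br3 a b c) d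

/-- The two-sided ideal generated by all fourth left-normed commutators. -/
def T4 (R : Type*) [Ring R] : TwoSidedIdeal R :=
  TwoSidedIdeal.span {x | ∃ a b c d : R, x = br4 a b c d}



lemma br4_mem {R : Type*} [Ring R] (a b c d : R) : br4 a b c d ∈ T4 R :=
  TwoSidedIdeal.subset_span ⟨a, b, c, d, rfl⟩

lemma T4_mul_left {R : Type*} [Ring R] (x : R) {y : R} (hy : y ∈ T4 R) : x * y ∈ T4 R :=
  (T4 R).mul_mem_left x y hy

lemma T4_mul_right {R : Type*} [Ring R] {x : R} (y : R) (hx : x ∈ T4 R) : x * y ∈ T4 R :=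
  (T4 R).mul_mem_right x y hx

theorem three_mul_comm23_mem_T4 {R : Type*} [Ring R] (a1 a2 a3 a4 a5 : R) :
    (3 : ℤ) • (br a1 a2 * br3 a3 a4 a5) ∈ T4 R := by
  have h3 : (3 : ℤ) • (br a1 a2 * br3 a3 a4 a5)
      = br a1 a2 * br3 a3 a4 a5 + br a1 a2 * br3 a3 a4 a5 + br a1 a2 * br3 a3 a4 a5 := by
    rw [show (3:ℤ) = 1+1+1 from rfl, add_smul, add_smul, one_smul]
  have key : br a1 a2 * br3 a3 a4 a5 + br a1 a2 * br3 a3 a4 a5 + br a1 a2 * br3 a3 a4 a5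
      = (br4 a1 a2 a3 a4 * a5) + (br4 a1 a2 a3 a4 * a5) + (br4 a1 a2 a3 a4 * a5) + (br4 a1 a2 a3 a4 * a5) - (br4 (a1 * a2) a3 a4 a5) - (br4 (a1 * a2) a3 a4 a5) + (br4 a1 (a2 * a3) a4 a5) + (br4 a1 (a2 * a3) a4 a5) + (br4 a1 (a2 * a3) a4 a5) - (br4 a1 a2 (a3 * a4) a5) - (br4 a1 a2 (a3 * a4) a5) + (br4 a1 a2 a3 a5 * a4) + (br4 (a1 * a2) a3 a5 a4) + (br4 (a1 * a2) a3 a5 a4) - (br4 a1 (a2 * a3) a5 a4) - (br4 a1 a2 (a3 * a5) a4) - (br4 a1 a2 (a3 * a5) a4) + (a5 * br4 a1 a2 a4 a3) + (a5 * br4 a1 a2 a4 a3) - (br4 a1 a2 a4 a3 * a5) - (br4 a1 a2 a4 a3 * a5) - (br4 a1 a2 a4 a3 * a5) - (br4 a1 a2 a4 a3 * a5) + (br4 a1 (a2 * a4) a3 a5) - (br4 a1 a2 a4 a5 * a3) + (br4 a1 (a2 * a4) a5 a3) + (a4 * br4 a1 a2 a5 a3) + (a4 * br4 a1 a2 a5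 a3) - (br4 a1 a2 a5 a3 * a4) - (br4 a1 a2 a5 a3 * a4) - (br4 a1 a2 a5 a3 * a4) + (br4 (a1 * a2) a5 a3 a4) + (br4 (a1 * a2) a5 a3 a4) - (br4 a1 (a2 * a5) a3 a4) - (br4 a1 (a2 * a5) a3 a4) + (br4 a1 a2 a5 a4 * a3) + (br4 a1 a2 a5 a4 * a3) + (br4 a1 a2 a5 a4 * a3) - (br4 (a1 * a2) a5 a4 a3) - (br4 (a1 * a2) a5 a4 a3) + (br4 a1 (a2 * a5) a4 a3) + (br4 a1 (a2 * a5) a4 a3) - (a5 * br4 a1 a3 a2 a4) - (a5 * br4 a1 a3 a2 a4) - (a5 * br4 a1 a3 a2 a4) + (br4 a1 a3 a2 a4 * a5) - (br4 a1 a3 (a2 * a4) a5) - (br4 a1 a3 (a2 * a4) a5) + (br4 a1 a3 a2 (a4 * a5)) + (br4 a1 a3 a2 a5 * a4) - (br4 a1 a3 (a2 * a5) a4) + (a5 * br4 a1 a3 a4 a2) + (a5 * br4 a1 a3 a4 a2) - (br4 a1 a3 a4 a2 * a5) - (br4 a1 a3 a4 a2 * a5) + (br4 (a1 * a3) a4 a2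 a5) + (br4 (a1 * a3) a4 a2 a5) + (br4 a1 a3 a4 a5 * a2) - (br4 (a1 * a3) a4 a5 a2) - (br4 (a1 * a3) a4 a5 a2) + (br4 a1 (a3 * a4) a5 a2) + (a4 * br4 a1 a3 a5 a2) - (br4 a1 a3 a5 a2 * a4) - (br4 a1 a3 a5 a2 * a4) + (br4 a1 (a3 * a5) a2 a4) + (br4 a1 (a3 * a5) a2 a4) - (a5 * br4 a1 a4 a2 a3) + (br4 a1 a4 a2 a3 * a5) - (br4 a1 a4 a2 (a3 * a5)) - (br4 a1 a4 a2 a5 * a3) + (br4 a1 a4 (a2 * a5) a3) + (br4 a1 a4 a3 a2 * a5) - (br4 a1 a4 a3 (a2 * a5)) - (a3 * br4 a1 a4 a5 a2) + (br4 a1 a4 a5 a2 * a3) + (br4 a1 a4 a5 a2 * a3) - (br4 (a1 * a4) a5 a2 a3) - (br4 (a1 * a4) a5 a2 a3) - (br4 a1 a4 a5 a3 * a2) - (br4 a1 a4 a5 a3 * a2) + (br4 (a1 * a4) a5 a3 a2) + (br4 (a1 * a4) a5 a3 a2) + (a4 * br4 a1 a5 a2 a3) + (a4 * br4 a1 a5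 a2 a3) + (br4 a1 a5 a2 a3 * a4) + (br4 a1 a5 a2 a3 * a4) - (br4 a1 a5 a2 (a3 * a4)) - (br4 a1 a5 a2 (a3 * a4)) - (a4 * br4 a1 a5 a3 a2) - (a4 * br4 a1 a5 a3 a2) := by
    simp only [br, br3, br4]
    noncomm_ring
  rw [h3, key]
  exact ((T4 R).sub_mem ((T4 R).sub_mem ((T4 R).sub_mem ((T4 R).sub_mem ((T4 R).add_mem ((T4 R).add_mem ((T4 R).add_mem ((T4 R).add_mem ((T4 R).add_mem ((T4 R).add_mem ((T4 R).sub_mem ((T4 R).sub_mem ((T4 R).sub_mem ((T4 R).sub_mem ((T4 R).add_mem ((T4 R).add_mem ((T4 R).sub_mem ((T4 R).sub_mem ((T4 R).add_mem ((T4 R).add_mem ((T4 R).sub_mem ((T4 R).sub_mem ((T4 R).add_mem ((T4 R).sub_mem ((T4 R).add_mem ((T4 R).add_mem ((T4 R).sub_mem ((T4 R).sub_mem ((T4 R).add_mem ((T4 R).add_mem ((T4 R).sub_mem ((T4 R).sub_mem ((T4 R).add_mem ((T4 R).add_mem ((T4 R).add_mem ((T4 R).sub_mem ((T4 R).sub_mem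 ((T4 R).add_mem ((T4 R).add_mem ((T4 R).sub_mem ((T4 R).add_mem ((T4 R).add_mem ((T4 R).sub_mem ((T4 R).sub_mem ((T4 R).add_mem ((T4 R).sub_mem ((T4 R).sub_mem ((T4 R).sub_mem ((T4 R).add_mem ((T4 R).add_mem ((T4 R).sub_mem ((T4 R).sub_mem ((T4 R).add_mem ((T4 R).add_mem ((T4 R).add_mem ((T4 R).sub_mem ((T4 R).sub_mem ((T4 R).add_mem ((T4 R).add_mem ((T4 R).sub_mem ((T4 R).sub_mem ((T4 R).sub_mem ((T4 R).add_mem ((T4 R).add_mem ((T4 R).add_mem ((T4 R).sub_mem ((T4 R).add_mem ((T4 R).sub_mem ((T4 R).sub_mem ((T4 R).sub_mem ((T4 R).sub_mem ((T4 R).add_mem ((T4 R).add_mem ((T4 R).sub_mem ((T4 R).sub_mem ((T4 R).sub_mem ((T4 R).add_mem ((T4 R).add_mem ((T4 R).add_mem ((T4 R).sub_mem ((T4 R).sub_mem ((T4 R).add_mem ((T4 R).add_mem ((T4 R).add_mem ((T4 R).sub_mem ((T4 R).sub_mem ((T4 R).add_mem ((T4 R).add_mem ((T4 R).add_mem (T4_mul_right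 _ (br4_mem _ _ _ _)) (T4_mul_right _ (br4_mem _ _ _ _))) (T4_mul_right _ (br4_mem _ _ _ _))) (T4_mul_right _ (br4_mem _ _ _ _))) (br4_mem _ _ _ _)) (br4_mem _ _ _ _)) (br4_mem _ _ _ _)) (br4_mem _ _ _ _)) (br4_mem _ _ _ _)) (br4_mem _ _ _ _)) (br4_mem _ _ _ _)) (T4_mul_right _ (br4_mem _ _ _ _))) (br4_mem _ _ _ _)) (br4_mem _ _ _ _)) (br4_mem _ _ _ _)) (br4_mem _ _ _ _)) (br4_mem _ _ _ _)) (T4_mul_left _ (br4_mem _ _ _ _))) (T4_mul_left _ (br4_mem _ _ _ _))) (T4_mul_right _ (br4_mem _ _ _ _))) (T4_mul_right _ (br4_mem _ _ _ _))) (T4_mul_right _ (br4_mem _ _ _ _))) (T4_mul_right _ (br4_mem _ _ _ _))) (br4_mem _ _ _ _)) (T4_mul_right _ (br4_mem _ _ _ _))) (br4_mem _ _ _ _)) (T4_mul_left _ (br4_mem _ _ _ _))) (T4_mul_left _ (br4_mem _ _ _ _))) (T4_mul_right _ (br4_mem _ _ _ _))) (T4_mul_right _ (br4_mem _ _ _ _)))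 (T4_mul_right _ (br4_mem _ _ _ _))) (br4_mem _ _ _ _)) (br4_mem _ _ _ _)) (br4_mem _ _ _ _)) (br4_mem _ _ _ _)) (T4_mul_right _ (br4_mem _ _ _ _))) (T4_mul_right _ (br4_mem _ _ _ _))) (T4_mul_right _ (br4_mem _ _ _ _))) (br4_mem _ _ _ _)) (br4_mem _ _ _ _)) (br4_mem _ _ _ _)) (br4_mem _ _ _ _)) (T4_mul_left _ (br4_mem _ _ _ _))) (T4_mul_left _ (br4_mem _ _ _ _))) (T4_mul_left _ (br4_mem _ _ _ _))) (T4_mul_right _ (br4_mem _ _ _ _))) (br4_mem _ _ _ _)) (br4_mem _ _ _ _)) (br4_mem _ _ _ _)) (T4_mul_right _ (br4_mem _ _ _ _))) (br4_mem _ _ _ _)) (T4_mul_left _ (br4_mem _ _ _ _))) (T4_mul_left _ (br4_mem _ _ _ _))) (T4_mul_right _ (br4_mem _ _ _ _))) (T4_mul_right _ (br4_mem _ _ _ _))) (br4_mem _ _ _ _)) (br4_mem _ _ _ _)) (T4_mul_right _ (br4_mem _ _ _ _))) (br4_mem _ _ _ _)) (br4_mem _ _ _ _)) (br4_mem _ _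 _ _)) (T4_mul_left _ (br4_mem _ _ _ _))) (T4_mul_right _ (br4_mem _ _ _ _))) (T4_mul_right _ (br4_mem _ _ _ _))) (br4_mem _ _ _ _)) (br4_mem _ _ _ _)) (T4_mul_left _ (br4_mem _ _ _ _))) (T4_mul_right _ (br4_mem _ _ _ _))) (br4_mem _ _ _ _)) (T4_mul_right _ (br4_mem _ _ _ _))) (br4_mem _ _ _ _)) (T4_mul_right _ (br4_mem _ _ _ _))) (br4_mem _ _ _ _)) (T4_mul_left _ (br4_mem _ _ _ _))) (T4_mul_right _ (br4_mem _ _ _ _))) (T4_mul_right _ (br4_mem _ _ _ _))) (br4_mem _ _ _ _)) (br4_mem _ _ _ _)) (T4_mul_right _ (br4_mem _ _ _ _))) (T4_mul_right _ (br4_mem _ _ _ _))) (br4_mem _ _ _ _)) (br4_mem _ _ _ _)) (T4_mul_left _ (br4_mem _ _ _ _))) (T4_mul_left _ (br4_mem _ _ _ _))) (T4_mul_right _ (br4_mem _ _ _ _))) (T4_mul_right _ (br4_mem _ _ _ _))) (br4_mem _ _ _ _)) (br4_mem _ _ _ _)) (T4_mul_left _ (br4_mem _ _ _ _))) (T4_mul_left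 _ (br4_mem _ _ _ _)))
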